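/- Let K̂ be a simplicial complex of dimension d−1 on n̂ vertices, with V(K̂) = V ∪ V', K := K̂[V] and K' := K̂[V'] induced subcomplexes such that every face of K̂ is a face of K or of K', and suppose K ⊄ K' and K' ⊄ K. Let K have n vertices and dimension d−1, let K' have n' vertices and dimension d'−1 with d' ≤ d, and suppose K and K' each satisfy the Taylor upper bound. Let t = M̃_{n̂−d}(K̂) − (n̂−d) − 1, and write Ũ(K̂) = (∏_{i=1}^{n̂−d} M̃_i(K̂))/(n̂−d)!. Then: (i) if d' = d and |V ∩ V'| ≤ d + t − 1, then f_{d−1}(K̂) ≤ Ũ(K̂) + |V ∩ V'| − (d + t − 1); (ii) if d' < d, then f_{d−1}(K̂) ≤ Ũ(K̂) − n' + |V ∩ V'|. -/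

import Mathlib

open Finset

/-- A simplicial complex on a finite vertex set: a collection of finite subsets
(faces) of the vertex set, closed under inclusion, containing every singleton. -/
structure SC (α : Type*) [DecidableEq α] where
  verts : Finset α
  faces : Finset (Finset α)
  subset_verts : ∀ F ∈ faces, F ⊆ verts
  down_closed : ∀ F ∈ faces, ∀ G, G ⊆ F → G ∈ faces
  singleton_mem : ∀ v ∈ verts, {v} ∈ faces

namespace SC

variable {α : Type*} [DecidableEq α]

/-- `dimP1 K = dim K + 1`: the maximal number of vertices of a face. -/
def dimP1 (K : SC α) : ℕ := K.faces.sup Finset.card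

/-- The number of faces with exactly `j` vertices, i.e. `f_{j-1}(K)`. -/
def fCard (K : SC α) (j : ℕ) : ℕ := (K.faces.filter (fun F => F.card = j)).card

/-- The minimal non-faces of `K`: subsets of the vertex set which are not faces,
all of whose proper subsets are faces. -/
def minNonFaces (K : SC α) : Finset (Finset α) :=
  K.verts.powerset.filter (fun F => F ∉ K.faces ∧ ∀ G ∈ F.powerset, G ≠ F → G ∈ K.faces)

/-- The `i`-th minimal Taylor shift `m̃_i(K)`: the minimal number of vertices covered by
a set of exactly `i` minimal non-faces of `K`. -/
noncomputable def mT (K : SC α) (i : ℕ) : ℕ :=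
  sInf {n | ∃ T ⊆ K.minNonFaces, T.card = i ∧ (T.sup id).card = n}

/-- The `i`-th maximal Taylor shift `M̃_i(K)`: the maximal number of vertices covered by
a set of exactly `i` minimal non-faces of `K`. -/
noncomputable def MT (K : SC α) (i : ℕ) : ℕ :=
  sSup {n | ∃ T ⊆ K.minNonFaces, T.card = i ∧ (T.sup id).card = n}

/-- The conjectured Taylor upper bound `(∏_{i=1}^{n-d} M̃_i(K))/(n-d)!` on `f_{d-1}(K)`. -/
noncomputable def taylorUBval (K : SC α) : ℚ :=
  (∏ i ∈ Finset.Icc 1 (K.verts.card - K.dimP1), (K.MT i : ℚ)) /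
    (Nat.factorial (K.verts.card - K.dimP1))

/-- The conjectured Taylor lower bound `(∏_{i=1}^{n-d} m̃_i(K))/(n-d)!` on `f_{d-1}(K)`. -/
noncomputable def taylorLBval (K : SC α) : ℚ :=
  (∏ i ∈ Finset.Icc 1 (K.verts.card - K.dimP1), (K.mT i : ℚ)) /
    (Nat.factorial (K.verts.card - K.dimP1))

/-- `K` satisfies the Taylor upper bound: `f_{d-1}(K) ≤ (∏_{i=1}^{n-d} M̃_i(K))/(n-d)!`. -/
def TaylorUB (K : SC α) : Prop := (K.fCard K.dimP1 : ℚ) ≤ K.taylorUBval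

/-- `K` satisfies the Taylor lower bound: `f_{d-1}(K) ≥ (∏_{i=1}^{n-d} m̃_i(K))/(n-d)!`. -/
def TaylorLB (K : SC α) : Prop := K.taylorLBval ≤ (K.fCard K.dimP1 : ℚ)

/-- The induced subcomplex `K[W]`: the faces of `K` contained in `W`. -/
def induced (K : SC α) (W : Finset α) : SC α where
  verts := K.verts ∩ W
  faces := K.faces.filter (fun F => F ⊆ W)
  subset_verts := by
    intro F hF
    simp only [mem_filter] at hF
    exact subset_inter (K.subset_verts F hF.1) hF.2
  down_closed := by
    intro F hF G hG
    simp only [mem_filter] at hF ⊢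
    exact ⟨K.down_closed F hF.1 G hG, hG.trans hF.2⟩
  singleton_mem := by
    intro v hv
    simp only [mem_inter] at hv
    simp only [mem_filter, singleton_subset_iff]
    exact ⟨K.singleton_mem v hv.1, hv.2⟩

end SC

/-!
Let `K` have `n` vertices and dimension `d - 1`, and let `F` be a facet. For `i ≤ n - d`
vertices `v ∉ F`, each `F ∪ {v}` contains a minimal non-face `G_v ∋ v`; the `G_v` are
distinct and one of them meets `F`, so they cover at least `i + 1` vertices: `M̃_i(K) ≥ i + 1`.
Writing `M = M̃_{n̂-d}(K̂)`, this gives, for `ℓ < n̂ - d`,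
`(∏_{i ≤ ℓ} M̃_i(K̂) / ℓ!) · M ≤ Ũ(K̂) · (ℓ + 1)`.
Minimal non-faces of an induced subcomplex are minimal non-faces of `K̂`, so
`Ũ(K̂[W]) · M ≤ Ũ(K̂) · (|W| - d + 1)` whenever `K̂[W]` also has dimension `d - 1`.
Every `(d-1)`-face of `K̂` lies in `K` or in `K'` (in `K` only, if `d' < d`), hence
`f_{d-1}(K̂) · M ≤ Ũ(K̂) · r` with `r = (n - d + 1) + (n' - d + 1)`, resp. `r = n - d + 1`.
Since `M ≤ Ũ(K̂)`, writing `M = r + s` turns this into `f_{d-1}(K̂) ≤ Ũ(K̂) - s`, where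
`s = d + t - 1 - |V ∩ V'|`, resp. `s ≥ n' - |V ∩ V'|`.
-/

def normalizedProd (m : ℕ → ℕ) (k : ℕ) : ℚ :=
  (∏ i ∈ Icc 1 k, (m i : ℚ)) / k.factorial

lemma normalizedProd_zero (m : ℕ → ℕ) : normalizedProd m 0 = 1 := by
  simp [normalizedProd]

lemma normalizedProd_succ (m : ℕ → ℕ) (k : ℕ) :
    normalizedProd m (k + 1) = normalizedProd m k * m (k + 1) / (k + 1) := by
  rw [normalizedProd, normalizedProd, prod_Icc_succ_top (by omega), Nat.factorial_succ]
  push_cast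
  field_simp

lemma normalizedProd_nonneg (m : ℕ → ℕ) (k : ℕ) : 0 ≤ normalizedProd m k := by
  unfold normalizedProd
  positivity

lemma normalizedProd_mono {u m : ℕ → ℕ} {k : ℕ} (h : ∀ i ∈ Icc 1 k, u i ≤ m i) :
    normalizedProd u k ≤ normalizedProd m k :=
  div_le_div_of_nonneg_right
    (prod_le_prod (fun _ _ => by positivity) fun i hi => by exact_mod_cast h i hi) (by positivity)

lemma normalizedProd_mul_succ_le {m : ℕ → ℕ} {a b : ℕ} (hab : a ≤ b)
    (hm : ∀ i, a < i → i ≤ b → i < m i) :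
    normalizedProd m a * (b + 1) ≤ normalizedProd m b * (a + 1) := by
  induction b, hab using Nat.le_induction with
  | base => rfl
  | succ b hab ih =>
    have ih := ih fun i hai hib => hm i hai (by omega)
    have hmb : (b + 1 + 1 : ℚ) ≤ m (b + 1) := by exact_mod_cast hm (b + 1) (by omega) le_rfl
    rw [normalizedProd_succ, div_mul_eq_mul_div, le_div_iff₀ (by positivity)]
    push_cast
    calc normalizedProd m a * (b + 1 + 1) * (b + 1)
        = normalizedProd m a * (b + 1) * (b + 1 + 1) := by ring
      _ ≤ normalizedProd m b * (a + 1) * m (b + 1) := by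
        gcongr
        exact mul_nonneg (normalizedProd_nonneg m b) (by positivity)
      _ = normalizedProd m b * m (b + 1) * (a + 1) := by ring

lemma normalizedProd_mul_le {m : ℕ → ℕ} {a b : ℕ} (hab : a < b)
    (hm : ∀ i, a < i → i < b → i < m i) :
    normalizedProd m a * m b ≤ normalizedProd m b * (a + 1) := by
  obtain ⟨c, rfl⟩ : ∃ c, b = c + 1 := ⟨b - 1, by omega⟩
  have h := normalizedProd_mul_succ_le (m := m) (Nat.lt_succ_iff.mp hab)
    fun i hai hic => hm i hai (by omega)
  rw [normalizedProd_succ, div_mul_eq_mul_div, le_div_iff₀ (by positivity)]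
  calc normalizedProd m a * m (c + 1) * (c + 1)
      = normalizedProd m a * (c + 1) * m (c + 1) := by ring
    _ ≤ normalizedProd m c * (a + 1) * m (c + 1) := by gcongr
    _ = normalizedProd m c * m (c + 1) * (a + 1) := by ring

lemma le_sub_of_mul_le_mul {𝕜 : Type*} [CommRing 𝕜] [LinearOrder 𝕜]
    [IsStrictOrderedRing 𝕜] {x U M r s : 𝕜} (hM : 0 < M) (hMU : M ≤ U) (hs : 0 ≤ s)
    (hrs : r + s ≤ M) (h : x * M ≤ U * r) : x ≤ U - s := by
  refine le_of_mul_le_mul_right ?_ hM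
  nlinarith [mul_nonneg (hM.le.trans hMU) (sub_nonneg.mpr hrs), mul_nonneg hs (sub_nonneg.mpr hMU)]

namespace SC

variable {α : Type*} [DecidableEq α] (K : SC α)

lemma card_le_dimP1 {F : Finset α} (hF : F ∈ K.faces) : F.card ≤ K.dimP1 :=
  le_sup hF

lemma one_le_dimP1 (h : K.verts.Nonempty) : 1 ≤ K.dimP1 :=
  let ⟨v, hv⟩ := h
  K.card_le_dimP1 (K.singleton_mem v hv)

lemma dimP1_le_card_verts : K.dimP1 ≤ K.verts.card :=
  Finset.sup_le fun F hF => card_le_card (K.subset_verts F hF)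

lemma exists_face_card_eq_dimP1 (h : K.verts.Nonempty) : ∃ F ∈ K.faces, F.card = K.dimP1 := by
  obtain ⟨v, hv⟩ := h
  obtain ⟨F, hF, hFd⟩ := exists_mem_eq_sup K.faces ⟨_, K.singleton_mem v hv⟩ card
  exact ⟨F, hF, hFd.symm⟩

lemma mem_minNonFaces {F : Finset α} :
    F ∈ K.minNonFaces ↔
      F ⊆ K.verts ∧ F ∉ K.faces ∧ ∀ G ⊆ F, G ≠ F → G ∈ K.faces := by
  simp [minNonFaces]

lemma exists_minNonFaces_subset {G : Finset α} (hG : G ⊆ K.verts) (hGf : G ∉ K.faces) :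
    ∃ F ∈ K.minNonFaces, F ⊆ G := by
  induction G using Finset.strongInduction with
  | H G ih =>
    by_cases h : ∀ H ⊆ G, H ≠ G → H ∈ K.faces
    · exact ⟨G, K.mem_minNonFaces.mpr ⟨hG, hGf, h⟩, subset_rfl⟩
    · push Not at h
      obtain ⟨H, hHG, hne, hHf⟩ := h
      obtain ⟨F, hF, hFH⟩ := ih H (ssubset_of_subset_of_ne hHG hne) (hHG.trans hG) hHf
      exact ⟨F, hF, hFH.trans hHG⟩

lemma exists_minNonFaces_of_facet {F : Finset α} (hF : F ∈ K.faces) (hFd : F.card = K.dimP1)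
    {v : α} (hv : v ∈ K.verts) (hvF : v ∉ F) :
    ∃ G ∈ K.minNonFaces, G ⊆ insert v F ∧ v ∈ G ∧ ∃ x ∈ F, x ∈ G := by
  have hnf : insert v F ∉ K.faces := fun h => by
    have := K.card_le_dimP1 h
    rw [card_insert_of_notMem hvF] at this
    omega
  obtain ⟨G, hG, hGsub⟩ :=
    K.exists_minNonFaces_subset (insert_subset hv (K.subset_verts F hF)) hnf
  have hGf := (K.mem_minNonFaces.mp hG).2.1
  refine ⟨G, hG, hGsub, ?_, ?_⟩
  · by_contra hvG
    refine hGf (K.down_closed F hF G fun y hy => ?_)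
    exact (mem_insert.mp (hGsub hy)).resolve_left (ne_of_mem_of_not_mem hy hvG)
  · by_contra! hFG
    refine hGf (K.down_closed {v} (K.singleton_mem v hv) G fun y hy => ?_)
    exact mem_singleton.mpr ((mem_insert.mp (hGsub hy)).resolve_right fun hyF => hFG y hyF hy)

lemma exists_minNonFaces_card_lt_card_sup {i : ℕ} (hi0 : 0 < i)
    (hi : i ≤ K.verts.card - K.dimP1) :
    ∃ T ⊆ K.minNonFaces, T.card = i ∧ i < (T.sup id).card := by
  obtain ⟨F, hF, hFd⟩ := K.exists_face_card_eq_dimP1 (card_pos.mp (by omega))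
  obtain ⟨S, hS, hSc⟩ := exists_subset_card_eq (s := K.verts \ F) (n := i)
    (by rw [card_sdiff_of_subset (K.subset_verts F hF), hFd]; exact hi)
  have hG : ∀ v ∈ S,
      ∃ G ∈ K.minNonFaces, G ⊆ insert v F ∧ v ∈ G ∧ ∃ x ∈ F, x ∈ G :=
    fun v hv => K.exists_minNonFaces_of_facet hF hFd (mem_sdiff.mp (hS hv)).1
      (mem_sdiff.mp (hS hv)).2
  choose! g hgK hgsub hvg hgF using hG
  have hinj : Set.InjOn g S := fun v hv w hw hvw =>
    ((mem_insert.mp (hgsub v hv (hvw ▸ hvg w hw))).resolve_right (mem_sdiff.mp (hS hw)).2).symm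
  obtain ⟨v₀, hv₀⟩ := card_pos.mp (hSc ▸ hi0)
  obtain ⟨x, hxF, hxg⟩ := hgF v₀ hv₀
  have hxS : x ∉ S := fun h => (mem_sdiff.mp (hS h)).2 hxF
  have hcover : insert x S ⊆ (S.image g).sup id :=
    insert_subset (mem_sup.mpr ⟨g v₀, mem_image_of_mem g hv₀, hxg⟩)
      fun v hv => mem_sup.mpr ⟨g v, mem_image_of_mem g hv, hvg v hv⟩
  refine ⟨S.image g, fun G hG => ?_, by rw [card_image_of_injOn hinj, hSc], ?_⟩
  · obtain ⟨v, hv, rfl⟩ := mem_image.mp hG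
    exact hgK v hv
  · calc i < (insert x S).card := by rw [card_insert_of_notMem hxS, hSc]; omega
      _ ≤ _ := card_le_card hcover

lemma card_sub_dimP1_le_card_minNonFaces : K.verts.card - K.dimP1 ≤ K.minNonFaces.card := by
  rcases Nat.eq_zero_or_pos (K.verts.card - K.dimP1) with h | h
  · omega
  · obtain ⟨T, hT, hTc, -⟩ := K.exists_minNonFaces_card_lt_card_sup h le_rfl
    exact hTc ▸ card_le_card hT

lemma bddAbove_card_sup_minNonFaces (i : ℕ) :
    BddAbove {n | ∃ T ⊆ K.minNonFaces, T.card = i ∧ (T.sup id).card = n} := by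
  refine ⟨K.verts.card, ?_⟩
  rintro n ⟨T, hT, -, rfl⟩
  exact card_le_card (Finset.sup_le fun F hF => (K.mem_minNonFaces.mp (hT hF)).1)

lemma lt_MT {i : ℕ} (hi0 : 0 < i) (hi : i ≤ K.verts.card - K.dimP1) : i < K.MT i := by
  obtain ⟨T, hT, hTc, hTs⟩ := K.exists_minNonFaces_card_lt_card_sup hi0 hi
  exact hTs.trans_le (le_csSup (K.bddAbove_card_sup_minNonFaces i) ⟨T, hT, hTc, rfl⟩)

lemma MT_mono {L : SC α} (h : L.minNonFaces ⊆ K.minNonFaces) {i : ℕ}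
    (hi : i ≤ L.minNonFaces.card) : L.MT i ≤ K.MT i := by
  obtain ⟨T, hT, hTc⟩ := exists_subset_card_eq hi
  refine csSup_le_csSup (K.bddAbove_card_sup_minNonFaces i) ⟨_, T, hT, hTc, rfl⟩ ?_
  rintro n ⟨T, hT, hTc, rfl⟩
  exact ⟨T, hT.trans h, hTc, rfl⟩

lemma taylorUBval_eq_normalizedProd :
    K.taylorUBval = normalizedProd K.MT (K.verts.card - K.dimP1) :=
  rfl

lemma MT_le_taylorUBval (h : 0 < K.verts.card - K.dimP1) :
    (K.MT (K.verts.card - K.dimP1) : ℚ) ≤ K.taylorUBval := by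
  simpa [taylorUBval_eq_normalizedProd, normalizedProd_zero] using
    normalizedProd_mul_le h fun i hi0 hi => K.lt_MT hi0 hi.le

lemma taylorUBval_mul_MT_le {L : SC α} (hL : L.minNonFaces ⊆ K.minNonFaces)
    (hlt : L.verts.card - L.dimP1 < K.verts.card - K.dimP1) :
    L.taylorUBval * K.MT (K.verts.card - K.dimP1) ≤
      K.taylorUBval * ((L.verts.card - L.dimP1 : ℕ) + 1) :=
  calc L.taylorUBval * K.MT (K.verts.card - K.dimP1)
      ≤ normalizedProd K.MT (L.verts.card - L.dimP1) * K.MT (K.verts.card - K.dimP1) := by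
        gcongr
        exact normalizedProd_mono fun i hi =>
          K.MT_mono hL ((mem_Icc.mp hi).2.trans L.card_sub_dimP1_le_card_minNonFaces)
    _ ≤ _ := normalizedProd_mul_le hlt fun i hi0 hi => K.lt_MT (by omega) hi.le

lemma le_taylorUBval_sub {x r s : ℚ} (hK : 0 < K.verts.card - K.dimP1) (hs : 0 ≤ s)
    (hrs : r + s ≤ K.MT (K.verts.card - K.dimP1))
    (h : x * K.MT (K.verts.card - K.dimP1) ≤ K.taylorUBval * r) : x ≤ K.taylorUBval - s :=
  le_sub_of_mul_le_mul (by exact_mod_cast hK.trans (K.lt_MT hK le_rfl))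
    (K.MT_le_taylorUBval hK) hs hrs h

lemma mem_induced_faces {W F : Finset α} :
    F ∈ (K.induced W).faces ↔ F ∈ K.faces ∧ F ⊆ W :=
  mem_filter

lemma induced_faces_mono {W W' : Finset α} (h : W ⊆ W') :
    (K.induced W).faces ⊆ (K.induced W').faces := fun _ hF =>
  K.mem_induced_faces.mpr ⟨(K.mem_induced_faces.mp hF).1, (K.mem_induced_faces.mp hF).2.trans h⟩

lemma card_lt_card_verts_of_not_induced_faces_subset {W W' : Finset α}
    (hV : K.verts = W ∪ W') (h : ¬ (K.induced W').faces ⊆ (K.induced W).faces) :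
    W.card < K.verts.card :=
  hV ▸ card_lt_card ⟨subset_union_left,
    fun hW => mt K.induced_faces_mono h (subset_union_right.trans hW)⟩

lemma minNonFaces_induced_subset (W : Finset α) :
    (K.induced W).minNonFaces ⊆ K.minNonFaces := by
  intro F hF
  obtain ⟨hFv, hFf, hmin⟩ := (K.induced W).mem_minNonFaces.mp hF
  have hFW : F ⊆ W := hFv.trans inter_subset_right
  exact K.mem_minNonFaces.mpr ⟨hFv.trans inter_subset_left,
    fun h => hFf (K.mem_induced_faces.mpr ⟨h, hFW⟩),
    fun G hG hne => (K.mem_induced_faces.mp (hmin G hG hne)).1⟩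

lemma induced_verts_of_subset {W : Finset α} (hW : W ⊆ K.verts) : (K.induced W).verts = W :=
  inter_eq_right.mpr hW

lemma induced_dimP1_le_card {W : Finset α} (hW : W ⊆ K.verts) :
    (K.induced W).dimP1 ≤ W.card := by
  simpa only [K.induced_verts_of_subset hW] using (K.induced W).dimP1_le_card_verts

lemma fCard_eq_zero_of_dimP1_lt {j : ℕ} (h : K.dimP1 < j) : K.fCard j = 0 :=
  card_eq_zero.mpr <| filter_eq_empty_iff.mpr fun _ hF hFj => by
    have := K.card_le_dimP1 hF
    omega

lemma fCard_le_add_of_faces_cover {W W' : Finset α} (h : ∀ F ∈ K.faces, F ⊆ W ∨ F ⊆ W')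
    (j : ℕ) : K.fCard j ≤ (K.induced W).fCard j + (K.induced W').fCard j := by
  refine (card_le_card fun F hF => ?_).trans (card_union_le _ _)
  simp only [mem_filter, mem_union, mem_induced_faces] at hF ⊢
  rcases h F hF.1 with hW | hW <;> simp [hF, hW]

lemma fCard_mul_MT_le_of_taylorUB_induced {W : Finset α} (hW : W ⊆ K.verts)
    (hWlt : W.card < K.verts.card) (hd : (K.induced W).dimP1 = K.dimP1)
    (hUB : (K.induced W).TaylorUB) :
    ((K.induced W).fCard K.dimP1 : ℚ) * K.MT (K.verts.card - K.dimP1) ≤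
      K.taylorUBval * (W.card - K.dimP1 + 1) := by
  have hdW := hd ▸ K.induced_dimP1_le_card hW
  have hU := K.taylorUBval_mul_MT_le (K.minNonFaces_induced_subset W)
    (by rw [K.induced_verts_of_subset hW, hd]; omega)
  rw [K.induced_verts_of_subset hW, hd, Nat.cast_sub hdW] at hU
  rw [TaylorUB, hd] at hUB
  exact (mul_le_mul_of_nonneg_right hUB (Nat.cast_nonneg _)).trans hU

end SC

open SC in
theorem taylorUB_union_strong_general {α : Type*} [DecidableEq α] (Khat : SC α) (V V' : Finset α)
    (d d' n' : ℕ)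
    (hdim : Khat.dimP1 = d)
    (hV : Khat.verts = V ∪ V')
    (hcover : ∀ F ∈ Khat.faces, F ⊆ V ∨ F ⊆ V')
    (hnsub : ¬ (Khat.induced V).faces ⊆ (Khat.induced V').faces)
    (hnsub' : ¬ (Khat.induced V').faces ⊆ (Khat.induced V).faces)
    (hn' : V'.card = n')
    (hdimK : (Khat.induced V).dimP1 = d) (hdimK' : (Khat.induced V').dimP1 = d')
    (hK : TaylorUB (Khat.induced V)) (hK' : TaylorUB (Khat.induced V'))
    (t : ℕ)
    (ht : Khat.MT (Khat.verts.card - d) = (Khat.verts.card - d) + t + 1) :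
    (d' = d → (V ∩ V').card ≤ d + t - 1 →
      (Khat.fCard d : ℚ) ≤ Khat.taylorUBval + ((V ∩ V').card : ℚ) - ((d : ℚ) + t - 1)) ∧
    (d' < d →
      (Khat.fCard d : ℚ) ≤ Khat.taylorUBval - (n' : ℚ) + ((V ∩ V').card : ℚ)) := by
  subst hn' hdim
  have hVsub : V ⊆ Khat.verts := hV ▸ subset_union_left
  have hV'sub : V' ⊆ Khat.verts := hV ▸ subset_union_right
  have hVlt := Khat.card_lt_card_verts_of_not_induced_faces_subset hV hnsub'
  have hV'lt := Khat.card_lt_card_verts_of_not_induced_faces_subset (union_comm V V' ▸ hV) hnsub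
  have hcard : (Khat.verts.card : ℚ) + (V ∩ V').card = V.card + V'.card := by
    exact_mod_cast hV ▸ card_union_add_card_inter V V'
  have hdV := hdimK ▸ Khat.induced_dimP1_le_card hVsub
  have hM : (Khat.MT (Khat.verts.card - Khat.dimP1) : ℚ) =
      Khat.verts.card - Khat.dimP1 + t + 1 := by
    rw [ht]; push_cast [Nat.cast_sub Khat.dimP1_le_card_verts]; ring
  have hKM := Khat.fCard_mul_MT_le_of_taylorUB_induced hVsub hVlt hdimK hK
  have hf : (Khat.fCard Khat.dimP1 : ℚ) ≤
      (Khat.induced V).fCard Khat.dimP1 + (Khat.induced V').fCard Khat.dimP1 := by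
    exact_mod_cast Khat.fCard_le_add_of_faces_cover hcover Khat.dimP1
  constructor
  · intro hdd hc
    have hK'M := Khat.fCard_mul_MT_le_of_taylorUB_induced hV'sub hV'lt (hdimK'.trans hdd) hK'
    have hcQ : ((V ∩ V').card : ℚ) ≤ Khat.dimP1 + t - 1 := by
      have := Khat.one_le_dimP1 (card_pos.mp (by omega))
      have h : ((V ∩ V').card + 1 : ℚ) ≤ Khat.dimP1 + t := by
        exact_mod_cast (by omega : _ + 1 ≤ _)
      linarith
    have := Khat.le_taylorUBval_sub (r := V.card - Khat.dimP1 + 1 + (V'.card - Khat.dimP1 + 1))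
      (s := Khat.dimP1 + t - 1 - (V ∩ V').card) (by omega) (sub_nonneg.mpr hcQ) (by linarith)
      ((mul_le_mul_of_nonneg_right hf (Nat.cast_nonneg _)).trans
        (by rw [add_mul, mul_add]; exact add_le_add hKM hK'M))
    linarith
  · intro hlt
    rw [(Khat.induced V').fCard_eq_zero_of_dimP1_lt (hdimK' ▸ hlt), Nat.cast_zero,
      add_zero] at hf
    have hcn' : ((V ∩ V').card : ℚ) ≤ V'.card := by
      exact_mod_cast card_le_card inter_subset_right
    have := Khat.le_taylorUBval_sub (r := V.card - Khat.dimP1 + 1)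
      (s := V'.card - (V ∩ V').card) (by omega) (sub_nonneg.mpr hcn') (by linarith)
      ((mul_le_mul_of_nonneg_right hf (Nat.cast_nonneg _)).trans hKM)
    linarith

open SC in
/-- Quantitative version of the union theorem: with `K = K̂[V]` of dimension `d-1` on `n`
vertices and `K' = K̂[V']` of dimension `d'-1 ≤ d-1` on `n'` vertices, neither contained
in the other, both satisfying the Taylor upper bound, and
`t = M̃_{n̂-d}(K̂) - (n̂-d) - 1`:
(i) if `d' = d` and `|V ∩ V'| ≤ d + t - 1` then
`f_{d-1}(K̂) ≤ Ũ(K̂) + |V ∩ V'| - (d + t - 1)`;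
(ii) if `d' < d` then `f_{d-1}(K̂) ≤ Ũ(K̂) - n' + |V ∩ V'|`. -/
theorem taylorUB_union_strong {α : Type*} [DecidableEq α] (Khat : SC α) (V V' : Finset α)
    (d d' n n' : ℕ) (hd : 1 ≤ d) (hd' : 1 ≤ d') (hdd : d' ≤ d)
    (hdim : Khat.dimP1 = d)
    (hV : Khat.verts = V ∪ V')
    (hcover : ∀ F ∈ Khat.faces, F ⊆ V ∨ F ⊆ V')
    (hnsub : ¬ (Khat.induced V).faces ⊆ (Khat.induced V').faces)
    (hnsub' : ¬ (Khat.induced V').faces ⊆ (Khat.induced V).faces)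
    (hn : V.card = n) (hn' : V'.card = n')
    (hdimK : (Khat.induced V).dimP1 = d) (hdimK' : (Khat.induced V').dimP1 = d')
    (hK : TaylorUB (Khat.induced V)) (hK' : TaylorUB (Khat.induced V'))
    (t : ℕ)
    (ht : Khat.MT (Khat.verts.card - d) = (Khat.verts.card - d) + t + 1) :
    (d' = d → (V ∩ V').card ≤ d + t - 1 →
      (Khat.fCard d : ℚ) ≤ Khat.taylorUBval + ((V ∩ V').card : ℚ) - ((d : ℚ) + t - 1)) ∧
    (d' < d →
      (Khat.fCard d : ℚ) ≤ Khat.taylorUBval - (n' : ℚ) + ((V ∩ V').card : ℚ)) :=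
  taylorUB_union_strong_general Khat V V' d d' n' hdim hV hcover hnsub hnsub' hn' hdimK hdimK' hK
    hK' t ht
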